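/- arXiv:2110.12375 — 2 statements merged into one kernel-verified Lean document; each statement's English description precedes it below -/
import Mathlib

section
/- Let a, b, c, d be integers with a·d − b·c ≠ 0, let m be a positive integer, and let K be the additive subgroup of ℤ × ℤ generated by (a, b) and (c, d), and L the additive subgroup generated by (m, 0) and (0, m). Assume L ≤ K (i.e., (m,0) and (0,m) are integer combinations of (a,b) and (c,d)). Then |a·d − b·c| divides m², and the index of L in K equals m²/|a·d − b·c|. -/
/-!
Both `K` and `L` are lattices of full rank in `ℤ × ℤ`, and the index of the lattice spanned by
two linearly independent vectors is the absolute value of their determinant (Smith normal form).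
Hence `[ℤ² : K] = |ad - bc|` and `[ℤ² : L] = m²`, and multiplicativity of the index in the tower
`L ≤ K ≤ ℤ²` gives `[K : L] · |ad - bc| = m²`.
-/

open Module Submodule

theorem linearIndependent_pair_prod_of_det_ne_zero {R : Type*} [CommRing R] [IsDomain R]
    {a b c d : R} (h : a * d - b * c ≠ 0) : LinearIndependent R ![(a, b), (c, d)] := by
  rw [LinearIndependent.pair_iff]
  intro s t hst
  have h1 : s * a + t * c = 0 := congrArg Prod.fst hst
  have h2 : s * b + t * d = 0 := congrArg Prod.snd hst
  refine ⟨(mul_eq_zero.mp ?_).resolve_right h, (mul_eq_zero.mp ?_).resolve_right h⟩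
  · linear_combination d * h1 - c * h2
  · linear_combination -b * h1 + a * h2

theorem AddSubgroup.index_closure_range_eq_natAbs_det {E ι : Type*} [AddCommGroup E] [Fintype ι]
    [DecidableEq ι] (bE : Basis ι ℤ E) {v : ι → E} (hv : LinearIndependent ℤ v) :
    (closure (Set.range v)).index = (bE.det v).natAbs := by
  let bN : Basis ι ℤ (closure (Set.range v)).toIntSubmodule :=
    (Basis.span hv).map (LinearEquiv.ofEq _ _ (by rw [← span_int_eq_addSubgroupClosure]; rfl))
  rw [index_eq_natAbs_det bE _ bN]
  congr with i
  exact congrArg Subtype.val (Basis.span_apply hv i)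

theorem AddSubgroup.index_closure_pair_prod {a b c d : ℤ} (h : a * d - b * c ≠ 0) :
    (closure {((a, b) : ℤ × ℤ), (c, d)}).index = (a * d - b * c).natAbs := by
  rw [← Matrix.range_cons_cons_empty, index_closure_range_eq_natAbs_det (Basis.finTwoProd ℤ)
    (linearIndependent_pair_prod_of_det_ne_zero h), Basis.det_apply, Matrix.det_fin_two]
  simp [Basis.toMatrix_apply, mul_comm c b]

/-- Sheet-counting (Claim 3.4) in coordinates: if `L = ⟨(m,0),(0,m)⟩ ≤ K = ⟨(a,b),(c,d)⟩`
in `ℤ × ℤ` with `ad − bc ≠ 0`, then `|ad − bc|` divides `m²` and the index of `L`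
in `K` is `m²/|ad − bc|`. -/
theorem stmt_4 (a b c d : ℤ) (had : a * d - b * c ≠ 0) (m : ℕ) (hm : 0 < m)
    (K L : AddSubgroup (ℤ × ℤ))
    (hK : K = AddSubgroup.closure {(a, b), (c, d)})
    (hL : L = AddSubgroup.closure {((m : ℤ), 0), (0, (m : ℤ))})
    (hLK : L ≤ K) :
    (a * d - b * c).natAbs ∣ m ^ 2 ∧
    L.relIndex K = m ^ 2 / (a * d - b * c).natAbs := by
  have hKidx : K.index = (a * d - b * c).natAbs := hK ▸ AddSubgroup.index_closure_pair_prod had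
  have hLidx : L.index = m ^ 2 := by
    have hdet : (m : ℤ) * m - 0 * 0 ≠ 0 := by simpa using hm.ne'
    rw [hL, AddSubgroup.index_closure_pair_prod hdet]
    simp [sq, Int.natAbs_mul]
  have htower : L.relIndex K * (a * d - b * c).natAbs = m ^ 2 := by
    rw [← hKidx, ← hLidx, AddSubgroup.relIndex_mul_index hLK]
  refine ⟨Dvd.intro_left _ htower, ?_⟩
  rw [← htower, Nat.mul_div_cancel _ (Int.natAbs_pos.mpr had)]
end

section
/- Let A and B be ℝ-linearly independent vectors in ℝ², let m be a positive integer, let α, β be the translations of ℝ² by A and B respectively, and let ρ be the linear automorphism of ℝ² determined by ρ(A) = −A and ρ(B) = B − A. Then ρ ∘ α^m ∘ ρ⁻¹ = α^{−m} and ρ ∘ β^m ∘ ρ⁻¹ = α^{−m} ∘ β^m. Consequently, the subgroup generated by α^m and β^m is a normal subgroup of the group of bijections of ℝ² generated by α, β and ρ. -/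
lemma addRight_pow' (v : ℝ × ℝ) (m : ℕ) :
    (Equiv.addRight v) ^ m = Equiv.addRight (m • v) := by
  induction m with
  | zero => refine Equiv.ext fun x => ?_; simp
  | succ n ih =>
      refine Equiv.ext fun x => ?_
      simp only [pow_succ, ih, Equiv.Perm.mul_apply, Equiv.coe_addRight, succ_nsmul]
      abel

lemma addRight_inv' (v : ℝ × ℝ) :
    (Equiv.addRight v)⁻¹ = Equiv.addRight (-v) := by
  symm
  rw [eq_inv_iff_mul_eq_one]
  refine Equiv.ext fun x => ?_
  simp [Equiv.Perm.mul_apply]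

lemma addRight_mul' (v w : ℝ × ℝ) :
    Equiv.addRight v * Equiv.addRight w = Equiv.addRight (w + v) := by
  refine Equiv.ext fun x => ?_
  simp [Equiv.Perm.mul_apply, add_assoc]

lemma conj_addRight' (ρ : (ℝ × ℝ) ≃ₗ[ℝ] (ℝ × ℝ)) (v : ℝ × ℝ) :
    (ρ.toEquiv : Equiv.Perm (ℝ × ℝ)) * Equiv.addRight v * (ρ.toEquiv : Equiv.Perm (ℝ × ℝ))⁻¹
      = Equiv.addRight (ρ v) := by
  refine Equiv.ext fun x => ?_
  simp [Equiv.Perm.mul_apply, map_add, Equiv.Perm.inv_def]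

lemma map_nsmul'' (ρ : (ℝ × ℝ) ≃ₗ[ℝ] (ℝ × ℝ)) (n : ℕ) (v : ℝ × ℝ) :
    ρ (n • v) = n • ρ v := map_nsmul ρ n v

lemma conj_mem_closure' {G : Type*} [Group G] (S : Set G) (g : G)
    (h1 : ∀ s ∈ S, g * s * g⁻¹ ∈ Subgroup.closure S) :
    ∀ h ∈ Subgroup.closure S, g * h * g⁻¹ ∈ Subgroup.closure S := by
  intro h hh
  induction hh using Subgroup.closure_induction with
  | mem s hs => exact h1 s hs
  | one => simpa using (Subgroup.closure S).one_mem
  | mul a b _ _ ha hb =>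
      have : g * (a * b) * g⁻¹ = (g * a * g⁻¹) * (g * b * g⁻¹) := by group
      rw [this]; exact mul_mem ha hb
  | inv a _ ha =>
      have : g * a⁻¹ * g⁻¹ = (g * a * g⁻¹)⁻¹ := by group
      rw [this]; exact inv_mem ha

lemma mem_normalizer_of_conj' {G : Type*} [Group G] (S : Set G) (g : G)
    (h1 : ∀ s ∈ S, g * s * g⁻¹ ∈ Subgroup.closure S)
    (h2 : ∀ s ∈ S, g⁻¹ * s * g ∈ Subgroup.closure S) :
    g ∈ Subgroup.normalizer (Subgroup.closure S : Set _) := by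
  rw [Subgroup.mem_normalizer_iff]
  intro h
  constructor
  · intro hh; exact conj_mem_closure' S g h1 h hh
  · intro hh
    have := conj_mem_closure' S g⁻¹ (by simpa using h2) _ hh
    simpa [mul_assoc] using this

/-- Claim 3.8 of the paper: with `α, β` the translations of `ℝ²` by linearly
independent vectors `A, B` and `ρ` the linear automorphism with `ρ(A) = −A`,
`ρ(B) = B − A`, one has `ρα^mρ⁻¹ = α^{−m}` and `ρβ^mρ⁻¹ = α^{−m}β^m`;
consequently `⟨α^m, β^m⟩` is normal in `⟨α, β, ρ⟩`. -/
theorem stmt_12 (A B : ℝ × ℝ)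
    (hAB : ∀ x y : ℝ, x • A + y • B = 0 → x = 0 ∧ y = 0)
    (m : ℕ) (hm : 0 < m)
    (ρ : (ℝ × ℝ) ≃ₗ[ℝ] (ℝ × ℝ))
    (hρA : ρ A = -A) (hρB : ρ B = B - A) :
    letI α : Equiv.Perm (ℝ × ℝ) := Equiv.addRight A
    letI β : Equiv.Perm (ℝ × ℝ) := Equiv.addRight B
    letI ρ' : Equiv.Perm (ℝ × ℝ) := ρ.toEquiv
    ρ' * α ^ m * ρ'⁻¹ = (α ^ m)⁻¹ ∧
    ρ' * β ^ m * ρ'⁻¹ = (α ^ m)⁻¹ * β ^ m ∧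
    ((Subgroup.closure ({α ^ m, β ^ m} : Set (Equiv.Perm (ℝ × ℝ)))).subgroupOf
        (Subgroup.closure ({α, β, ρ'} : Set (Equiv.Perm (ℝ × ℝ))))).Normal := by
  set α : Equiv.Perm (ℝ × ℝ) := Equiv.addRight A with hαdef
  set β : Equiv.Perm (ℝ × ℝ) := Equiv.addRight B with hβdef
  set ρ' : Equiv.Perm (ℝ × ℝ) := ρ.toEquiv with hρdef
  have hα : α ^ m = Equiv.addRight (m • A) := addRight_pow' A m
  have hβ : β ^ m = Equiv.addRight (m • B) := addRight_pow' B m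
  have key1 : ρ' * α ^ m * ρ'⁻¹ = (α ^ m)⁻¹ := by
    rw [hα, conj_addRight', map_nsmul'', hρA, smul_neg, ← addRight_inv']
  have key2 : ρ' * β ^ m * ρ'⁻¹ = (α ^ m)⁻¹ * β ^ m := by
    rw [hβ, hα, conj_addRight', map_nsmul'', hρB, addRight_inv', addRight_mul']
    congr 1
    rw [smul_sub]
    abel
  refine ⟨key1, key2, ?_⟩
  have hsymmA : ρ.symm A = -A := by
    rw [LinearEquiv.symm_apply_eq, map_neg, hρA, neg_neg]
  have hsymmB : ρ.symm B = B - A := by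
    rw [LinearEquiv.symm_apply_eq, map_sub, hρB, hρA]; abel
  have hρ'symm : ρ'⁻¹ = (ρ.symm.toEquiv : Equiv.Perm (ℝ × ℝ)) := rfl
  have hinv : ρ' = ((ρ.symm.toEquiv : Equiv.Perm (ℝ × ℝ)))⁻¹ := rfl
  have key1' : ρ'⁻¹ * α ^ m * ρ' = (α ^ m)⁻¹ := by
    rw [hα, hρ'symm, hinv, conj_addRight', map_nsmul'', hsymmA, smul_neg, ← addRight_inv']
  have key2' : ρ'⁻¹ * β ^ m * ρ' = (α ^ m)⁻¹ * β ^ m := by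
    rw [hβ, hα, hρ'symm, hinv, conj_addRight', map_nsmul'', hsymmB, addRight_inv',
      addRight_mul']
    congr 1
    rw [smul_sub]
    abel
  set S : Set (Equiv.Perm (ℝ × ℝ)) := {α ^ m, β ^ m} with hS
  have hαm : α ^ m ∈ Subgroup.closure S := Subgroup.subset_closure (by simp [hS])
  have hβm : β ^ m ∈ Subgroup.closure S := Subgroup.subset_closure (by simp [hS])
  have comm : ∀ v w : ℝ × ℝ,
      Equiv.addRight v * Equiv.addRight w = Equiv.addRight w * Equiv.addRight v := by
    intro v w; rw [addRight_mul', addRight_mul', add_comm]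
  have conj_of_comm : ∀ g : Equiv.Perm (ℝ × ℝ), (∀ s ∈ S, Commute g s) →
      g ∈ Subgroup.normalizer (Subgroup.closure S : Set _) := by
    intro g hg
    refine mem_normalizer_of_conj' S g ?_ ?_
    · intro s hs
      have : g * s * g⁻¹ = s := by rw [(hg s hs).eq]; group
      rw [this]; exact Subgroup.subset_closure hs
    · intro s hs
      have : g⁻¹ * s * g = s := by rw [(hg s hs).inv_left.eq]; group
      rw [this]; exact Subgroup.subset_closure hs
  have hle : Subgroup.closure ({α, β, ρ'} : Set (Equiv.Perm (ℝ × ℝ)))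
      ≤ Subgroup.normalizer (Subgroup.closure S : Set _) := by
    rw [Subgroup.closure_le]
    rintro g (rfl | rfl | rfl)
    · refine conj_of_comm _ ?_
      rintro s (rfl | rfl)
      · rw [hα]; exact comm A (m • A)
      · rw [hβ]; exact comm A (m • B)
    · refine conj_of_comm _ ?_
      rintro s (rfl | rfl)
      · rw [hα]; exact comm B (m • A)
      · rw [hβ]; exact comm B (m • B)
    · refine mem_normalizer_of_conj' S _ ?_ ?_
      · rintro s (rfl | rfl)
        · rw [key1]; exact inv_mem hαm
        · rw [key2]; exact mul_mem (inv_mem hαm) hβm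
      · rintro s (rfl | rfl)
        · rw [key1']; exact inv_mem hαm
        · rw [key2']; exact mul_mem (inv_mem hαm) hβm
  constructor
  intro n hn g
  rw [Subgroup.mem_subgroupOf] at hn ⊢
  have hg := hle g.2
  rw [Subgroup.mem_normalizer_iff] at hg
  simpa using (hg (n : Equiv.Perm (ℝ × ℝ))).mp hn
end
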